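/- arXiv:1808.04163 — 5 statements merged into one kernel-verified Lean document; each statement's English description precedes it below -/
import Mathlib

section
/- For the L2(0,1) orthogonal projection P onto the space of discontinuous piecewise polynomials of degree at most p on the uniform partition of [0,1] into n intervals, the function f(x) = x^{p+1} satisfies ‖f − P f‖_{L^2} = ((p+1)!/((2p+2)!·√(2p+3))) · n^{−(p+1)} · ‖f^{(p+1)}‖_{L^2}. -/
open Real MeasureTheory Set

/-- Membership in the space `S^p_{−1,n}` of (discontinuous) piecewise polynomials of degree at
most `p` on the uniform partition of `[0,1)` into `n` intervals `[j/n,(j+1)/n)`. -/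
def IsPiecewisePoly (p n : ℕ) (g : ℝ → ℝ) : Prop :=
  ∀ j < n, ∃ q : Polynomial ℝ, q.natDegree ≤ p ∧
    ∀ x ∈ Set.Ico ((j : ℝ) / n) (((j : ℝ) + 1) / n), g x = q.eval x

/-!
On the cell `[j/n, (j+1)/n)` the error `x ^ (p+1) - Pf x` is a monic polynomial of degree
`m = p+1` orthogonal to all polynomials of degree `≤ p`, i.e. the monic Legendre polynomial of
that cell. Concretely, the function `E` equal on every cell to the rescaled monic Legendre
polynomial (Rodrigues' formula) differs from the error by an element of the space and is
orthogonal to the space, so the error and `E` have the same `L²` norm. Integrating by parts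
`m` times and a Beta integral give `‖L‖² = (m!)⁴ / ((2m)!² (2m+1))` for the monic Legendre
polynomial `L` on `[0, 1]`; each of the `n` cells contributes `n⁻¹ n⁻²ᵐ ‖L‖²`.
-/

open Polynomial
open scoped Nat

theorem integral_pow_mul_one_sub_pow (a b : ℕ) :
    ∫ x in (0 : ℝ)..1, x ^ a * (1 - x) ^ b = a ! * b ! / (a + b + 1)! := by
  induction b generalizing a with
  | zero =>
    simp only [pow_zero, mul_one, integral_pow, Nat.factorial_zero, add_zero, Nat.factorial_succ]
    push_cast
    field_simp
    simp
  | succ b ih =>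
    have ha : (a : ℝ) + 1 ≠ 0 := by positivity
    have hu (x : ℝ) :
        HasDerivAt (fun x : ℝ => (1 - x) ^ (b + 1)) (-((b + 1) * (1 - x) ^ b)) x := by
      simpa using ((hasDerivAt_id x).const_sub 1).fun_pow (b + 1)
    have hv (x : ℝ) : HasDerivAt (fun x : ℝ => x ^ (a + 1) / (a + 1)) (x ^ a) x := by
      refine ((hasDerivAt_pow (a + 1) x).div_const ((a : ℝ) + 1)).congr_deriv ?_
      push_cast; field_simp
    have hparts := intervalIntegral.integral_mul_deriv_eq_deriv_mul (a := 0) (b := 1)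
      (fun x _ => hu x) (fun x _ => hv x) (Continuous.intervalIntegrable (by fun_prop) _ _)
      (Continuous.intervalIntegrable (by fun_prop) _ _)
    calc ∫ x in (0 : ℝ)..1, x ^ a * (1 - x) ^ (b + 1)
        = (b + 1) / (a + 1) * ∫ x in (0 : ℝ)..1, x ^ (a + 1) * (1 - x) ^ b := by
          simp_rw [mul_comm (_ ^ a)]
          rw [hparts, ← intervalIntegral.integral_const_mul]
          simp only [sub_self, ne_eq, Nat.add_eq_zero_iff, one_ne_zero, and_false,
            not_false_eq_true, zero_pow, zero_mul, sub_zero, one_pow, zero_div, mul_zero,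
            neg_mul, intervalIntegral.integral_neg, sub_neg_eq_add, zero_add]
          congr 1; ext x; field_simp
      _ = a ! * (b + 1)! / (a + (b + 1) + 1)! := by
          rw [ih, Nat.factorial_succ a, Nat.factorial_succ b,
            show a + 1 + b + 1 = a + (b + 1) + 1 by ring]
          push_cast
          field_simp

theorem intervalIntegral.integral_comp_mul_sub_div (f : ℝ → ℝ) {c : ℝ} (hc : c ≠ 0)
    (s : ℝ) :
    ∫ x in s / c..(s + 1) / c, f (c * x - s) = c⁻¹ * ∫ u in (0 : ℝ)..1, f u := by
  rw [intervalIntegral.integral_comp_mul_sub f hc, smul_eq_mul, mul_div_cancel₀ _ hc,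
    mul_div_cancel₀ _ hc, sub_self, add_sub_cancel_left]

theorem integral_sq_eq_of_sub_orthogonal {α : Type*} [MeasurableSpace α] {μ : Measure α}
    {e E : α → ℝ} (he : Integrable (fun x => e x * (e x - E x)) μ)
    (hE : Integrable (fun x => E x * (e x - E x)) μ) (hE2 : Integrable (fun x => E x ^ 2) μ)
    (he0 : ∫ x, e x * (e x - E x) ∂μ = 0) (hE0 : ∫ x, E x * (e x - E x) ∂μ = 0) :
    ∫ x, e x ^ 2 ∂μ = ∫ x, E x ^ 2 ∂μ :=
  calc ∫ x, e x ^ 2 ∂μ = ∫ x, (e x * (e x - E x) + E x * (e x - E x) + E x ^ 2) ∂μ := by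
        congr 1; ext x; ring
    _ = ∫ x, E x ^ 2 ∂μ := by
        rw [integral_add (f := fun x => e x * (e x - E x) + E x * (e x - E x)) (he.add hE) hE2,
          integral_add he hE, he0, hE0, zero_add, zero_add]

namespace Polynomial

theorem isRoot_iterate_derivative_of_pow_dvd {R : Type*} [CommRing R] {p : R[X]} {t : R}
    {m j : ℕ} (h : (X - C t) ^ m ∣ p) (hj : j < m) : (derivative^[j] p).IsRoot t :=
  dvd_iff_isRoot.mp <| (dvd_pow_self _ (Nat.sub_ne_zero_of_lt hj)).trans
    (pow_sub_dvd_iterate_derivative_of_pow_dvd j h)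

theorem IsMonicOfDegree.iterate_derivative_eq_C_factorial {R : Type*} [CommRing R] {p : R[X]}
    {m : ℕ} (hp : IsMonicOfDegree p m) : derivative^[m] p = C (m ! : R) := by
  rw [eq_C_of_natDegree_le_zero ((natDegree_iterate_derivative p m).trans
      (by rw [hp.natDegree_eq, Nat.sub_self])),
    coeff_iterate_derivative, zero_add, Nat.descFactorial_self, ← hp.natDegree_eq,
    hp.monic.coeff_natDegree, nsmul_one]

theorem IsMonicOfDegree.C_inv_pow_mul_comp_C_mul_X_sub_C {p : ℝ[X]} {m : ℕ}
    (hp : IsMonicOfDegree p m) {c : ℝ} (hc : c ≠ 0) (s : ℝ) :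
    IsMonicOfDegree (C (c ^ m)⁻¹ * p.comp (C c * X - C s)) m := by
  have hq : (C c * X - C s).natDegree = 1 := by
    rw [natDegree_sub_C, natDegree_C_mul_X c hc]
  rw [isMonicOfDegree_iff]
  constructor
  · refine (natDegree_C_mul_le _ _).trans (natDegree_comp_le.trans ?_)
    rw [hq, hp.natDegree_eq, mul_one]
  · have htop := coeff_comp_degree_mul_degree (p := p) (hq.symm ▸ one_ne_zero)
    rw [hq, mul_one, hp.natDegree_eq, hp.leadingCoeff_eq, one_mul] at htop
    rw [coeff_C_mul, htop, leadingCoeff, hq]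
    simp [hc]

theorem integral_eval_mul_iterate_derivative {a b : ℝ} (q G : ℝ[X]) (s : ℕ)
    (ha : ∀ j < s, (derivative^[j] G).IsRoot a) (hb : ∀ j < s, (derivative^[j] G).IsRoot b) :
    ∫ x in a..b, q.eval x * (derivative^[s] G).eval x =
      (-1) ^ s * ∫ x in a..b, (derivative^[s] q).eval x * G.eval x := by
  induction s generalizing q with
  | zero => simp
  | succ s ih =>
    have hparts := intervalIntegral.integral_mul_deriv_eq_deriv_mul
      (fun x _ => q.hasDerivAt x) (fun x _ => (derivative^[s] G).hasDerivAt x)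
      ((derivative q).continuous.intervalIntegrable a b)
      ((derivative (derivative^[s] G)).continuous.intervalIntegrable a b)
    rw [Function.iterate_succ_apply', hparts, (ha s s.lt_succ_self).eq_zero,
      (hb s s.lt_succ_self).eq_zero, ih _ (fun j hj => ha j (hj.trans s.lt_succ_self))
        (fun j hj => hb j (hj.trans s.lt_succ_self)), Function.iterate_succ_apply]
    ring

/-- By Rodrigues' formula (`factorial_mul_shiftedLegendre_eq`) this is
`(-1) ^ m (m !) ^ 2 / (2m)!` times `shiftedLegendre m`, normalized to be monic. -/
noncomputable def monicShiftedLegendre (m : ℕ) : ℝ[X] :=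
  C ((m ! : ℝ) / (2 * m)!) * derivative^[m] ((X * (X - 1)) ^ m)

theorem isMonicOfDegree_X_mul_X_sub_one_pow (m : ℕ) :
    IsMonicOfDegree ((X * (X - 1) : ℝ[X]) ^ m) (2 * m) := by
  simpa [two_mul] using ((isMonicOfDegree_X ℝ).mul (isMonicOfDegree_X_sub_one (1 : ℝ))).pow m

theorem isMonicOfDegree_monicShiftedLegendre (m : ℕ) :
    IsMonicOfDegree (monicShiftedLegendre m) m := by
  have hG := isMonicOfDegree_X_mul_X_sub_one_pow m
  rw [isMonicOfDegree_iff]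
  constructor
  · refine (natDegree_C_mul_le _ _).trans ((natDegree_iterate_derivative _ _).trans ?_)
    rw [hG.natDegree_eq]; omega
  · rw [monicShiftedLegendre, coeff_C_mul, coeff_iterate_derivative, ← two_mul,
      ← hG.natDegree_eq, hG.monic.coeff_natDegree, nsmul_one, hG.natDegree_eq]
    have hfac := Nat.factorial_mul_descFactorial (show m ≤ 2 * m by omega)
    rw [show 2 * m - m = m by omega] at hfac
    field_simp
    exact_mod_cast hfac

theorem isRoot_iterate_derivative_X_mul_X_sub_one_pow {m j : ℕ} (hj : j < m) {t : ℝ}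
    (ht : t = 0 ∨ t = 1) : (derivative^[j] ((X * (X - 1) : ℝ[X]) ^ m)).IsRoot t := by
  refine isRoot_iterate_derivative_of_pow_dvd ?_ hj
  rw [mul_pow]
  rcases ht with rfl | rfl <;> simp

theorem integral_eval_mul_monicShiftedLegendre (m : ℕ) (q : ℝ[X]) :
    ∫ x in (0 : ℝ)..1, q.eval x * (monicShiftedLegendre m).eval x =
      (m ! : ℝ) / (2 * m)! * (-1) ^ m *
        ∫ x in (0 : ℝ)..1, (derivative^[m] q).eval x * (x * (x - 1)) ^ m := by
  simp_rw [monicShiftedLegendre, eval_mul, eval_C, mul_left_comm (q.eval _),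
    intervalIntegral.integral_const_mul]
  rw [integral_eval_mul_iterate_derivative _ _ _
    (fun j hj => isRoot_iterate_derivative_X_mul_X_sub_one_pow hj (.inl rfl))
    (fun j hj => isRoot_iterate_derivative_X_mul_X_sub_one_pow hj (.inr rfl))]
  simp [mul_assoc]

theorem integral_eval_mul_monicShiftedLegendre_eq_zero {m : ℕ} {q : ℝ[X]}
    (hq : q.natDegree < m) :
    ∫ x in (0 : ℝ)..1, q.eval x * (monicShiftedLegendre m).eval x = 0 := by
  simp [integral_eval_mul_monicShiftedLegendre, iterate_derivative_eq_zero hq]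

theorem integral_monicShiftedLegendre_sq (m : ℕ) :
    ∫ x in (0 : ℝ)..1, ((monicShiftedLegendre m).eval x) ^ 2 =
      (m ! : ℝ) ^ 4 / ((2 * m)! ^ 2 * (2 * m + 1)) := by
  have hG : ∫ x in (0 : ℝ)..1, (x * (x - 1)) ^ m = (-1) ^ m * (m ! * m ! / (2 * m + 1)!) := by
    rw [two_mul, ← integral_pow_mul_one_sub_pow, ← intervalIntegral.integral_const_mul]
    congr 1; ext x
    rw [← mul_pow, ← mul_pow]; ring_nf
  simp_rw [sq, integral_eval_mul_monicShiftedLegendre,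
    (isMonicOfDegree_monicShiftedLegendre m).iterate_derivative_eq_C_factorial, eval_C,
    intervalIntegral.integral_const_mul, hG, Nat.factorial_succ]
  push_cast
  field_simp
  rw [← pow_mul, mul_comm, pow_mul, neg_one_sq, one_pow]

noncomputable def affineMonicLegendre (m : ℕ) (c s : ℝ) : ℝ[X] :=
  C (c ^ m)⁻¹ * (monicShiftedLegendre m).comp (C c * X - C s)

theorem isMonicOfDegree_affineMonicLegendre (m : ℕ) {c : ℝ} (hc : c ≠ 0) (s : ℝ) :
    IsMonicOfDegree (affineMonicLegendre m c s) m :=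
  (isMonicOfDegree_monicShiftedLegendre m).C_inv_pow_mul_comp_C_mul_X_sub_C hc s

theorem eval_affineMonicLegendre (m : ℕ) (c s x : ℝ) :
    (affineMonicLegendre m c s).eval x =
      (c ^ m)⁻¹ * (monicShiftedLegendre m).eval (c * x - s) := by
  simp [affineMonicLegendre]

theorem integral_eval_affineMonicLegendre_mul_eq_zero (m : ℕ) {c : ℝ} (hc : c ≠ 0) (s : ℝ)
    {q : ℝ[X]} (hq : q.natDegree < m) :
    ∫ x in s / c..(s + 1) / c, (affineMonicLegendre m c s).eval x * q.eval x = 0 := by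
  set q' := q.comp (C c⁻¹ * (X + C s))
  have hq' : q'.natDegree < m :=
    calc q'.natDegree ≤ q.natDegree * 1 := natDegree_comp_le.trans <|
          Nat.mul_le_mul_left _ ((natDegree_C_mul_le _ _).trans (natDegree_X_add_C s).le)
      _ < m := by rwa [mul_one]
  have h (x : ℝ) : (affineMonicLegendre m c s).eval x * q.eval x =
      (c ^ m)⁻¹ * (q'.eval (c * x - s) * (monicShiftedLegendre m).eval (c * x - s)) := by
    simp [q', eval_affineMonicLegendre, hc]; ring
  simp_rw [h, intervalIntegral.integral_comp_mul_sub_div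
      (fun u => (c ^ m)⁻¹ * (q'.eval u * (monicShiftedLegendre m).eval u)) hc,
    intervalIntegral.integral_const_mul, integral_eval_mul_monicShiftedLegendre_eq_zero hq',
    mul_zero]

theorem integral_eval_affineMonicLegendre_sq (m : ℕ) {c : ℝ} (hc : c ≠ 0) (s : ℝ) :
    ∫ x in s / c..(s + 1) / c, ((affineMonicLegendre m c s).eval x) ^ 2 =
      c⁻¹ * ((c ^ m)⁻¹) ^ 2 *
        ∫ u in (0 : ℝ)..1, ((monicShiftedLegendre m).eval u) ^ 2 := by
  simp_rw [eval_affineMonicLegendre, mul_pow]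
  rw [intervalIntegral.integral_comp_mul_sub_div
      (fun u => ((c ^ m)⁻¹) ^ 2 * ((monicShiftedLegendre m).eval u) ^ 2) hc,
    intervalIntegral.integral_const_mul, mul_assoc]

end Polynomial

theorem isPiecewisePoly_pow (p n : ℕ) : IsPiecewisePoly p n (· ^ p) :=
  fun _ _ => ⟨X ^ p, natDegree_X_pow_le p, fun x _ => by simp⟩

theorem intervalIntegrable_of_eqOn_Ico {a b : ℝ} (hab : a ≤ b) {f : ℝ → ℝ} {P : ℝ[X]}
    (h : EqOn f P.eval (Ico a b)) : IntervalIntegrable f volume a b := by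
  rw [intervalIntegrable_iff_integrableOn_Ioo_of_le hab]
  exact (P.continuous.integrableOn_Icc.mono_set Ioo_subset_Icc_self).congr_fun
    (h.mono Ioo_subset_Ico_self).symm measurableSet_Ioo

theorem div_le_add_one_div (j n : ℕ) : (j : ℝ) / n ≤ ((j : ℝ) + 1) / n := by
  gcongr; linarith

namespace IsPiecewisePoly

variable {p q n : ℕ} {f g : ℝ → ℝ}

theorem mono (hf : IsPiecewisePoly p n f) (hpq : p ≤ q) : IsPiecewisePoly q n f := fun j hj =>
  let ⟨P, hP, hfP⟩ := hf j hj
  ⟨P, hP.trans hpq, hfP⟩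

theorem sub (hf : IsPiecewisePoly p n f) (hg : IsPiecewisePoly p n g) :
    IsPiecewisePoly p n (fun x => f x - g x) := fun j hj =>
  let ⟨P, hP, hfP⟩ := hf j hj
  let ⟨Q, hQ, hgQ⟩ := hg j hj
  ⟨P - Q, (natDegree_sub_le _ _).trans (max_le hP hQ), fun x hx => by simp [hfP x hx, hgQ x hx]⟩

theorem mul (hf : IsPiecewisePoly p n f) (hg : IsPiecewisePoly q n g) :
    IsPiecewisePoly (p + q) n (fun x => f x * g x) := fun j hj =>
  let ⟨P, hP, hfP⟩ := hf j hj
  let ⟨Q, hQ, hgQ⟩ := hg j hj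
  ⟨P * Q, natDegree_mul_le.trans (add_le_add hP hQ), fun x hx => by simp [hfP x hx, hgQ x hx]⟩

theorem intervalIntegrable_piece (hf : IsPiecewisePoly p n f) {j : ℕ} (hj : j < n) :
    IntervalIntegrable f volume ((j : ℝ) / n) (((j : ℝ) + 1) / n) :=
  let ⟨_, _, hfP⟩ := hf j hj
  intervalIntegrable_of_eqOn_Ico (div_le_add_one_div j n) hfP

theorem integrableOn (hn : n ≠ 0) (hf : IsPiecewisePoly p n f) : IntegrableOn f (Ioo 0 1) := by
  have h := IntervalIntegrable.trans_iterate (a := fun k : ℕ => (k : ℝ) / n)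
    (fun k hk => by simpa [Nat.cast_succ] using hf.intervalIntegrable_piece hk)
  simp only [Nat.cast_zero, zero_div, div_self (Nat.cast_ne_zero.mpr hn : (n : ℝ) ≠ 0)] at h
  exact ((intervalIntegrable_iff_integrableOn_Ioc_of_le zero_le_one).mp h).mono_set
    Ioo_subset_Ioc_self

theorem integral_Ioo_eq_sum (hn : n ≠ 0) (hf : IsPiecewisePoly p n f) :
    ∫ x in Ioo 0 1, f x =
      ∑ j ∈ Finset.range n, ∫ x in (j : ℝ) / n..((j : ℝ) + 1) / n, f x := by
  have h := intervalIntegral.sum_integral_adjacent_intervals (a := fun k : ℕ => (k : ℝ) / n)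
    (fun k hk => by simpa [Nat.cast_succ] using hf.intervalIntegrable_piece hk)
  simp only [Nat.cast_zero, zero_div, div_self (Nat.cast_ne_zero.mpr hn : (n : ℝ) ≠ 0),
    Nat.cast_succ] at h
  rw [h, intervalIntegral.integral_of_le zero_le_one, integral_Ioc_eq_integral_Ioo]

end IsPiecewisePoly

theorem Int.fract_natCast_mul_eq {n j : ℕ} (hn : 0 < n) {x : ℝ}
    (hx : x ∈ Ico ((j : ℝ) / n) (((j : ℝ) + 1) / n)) : Int.fract (n * x) = n * x - j := by
  have hn' : (0 : ℝ) < n := Nat.cast_pos.mpr hn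
  rw [Int.fract_eq_iff]
  refine ⟨?_, ?_, j, by simp⟩
  · have := (div_le_iff₀ hn').mp hx.1; linarith
  · have := (lt_div_iff₀ hn').mp hx.2; linarith

noncomputable def piecewiseMonicLegendre (m n : ℕ) (x : ℝ) : ℝ :=
  ((n : ℝ) ^ m)⁻¹ * (monicShiftedLegendre m).eval (Int.fract (n * x))

theorem piecewiseMonicLegendre_eqOn {m n j : ℕ} (hj : j < n) :
    EqOn (piecewiseMonicLegendre m n) (affineMonicLegendre m n j).eval
      (Ico ((j : ℝ) / n) (((j : ℝ) + 1) / n)) := fun x hx => by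
  rw [piecewiseMonicLegendre, Int.fract_natCast_mul_eq (by omega) hx]
  exact (eval_affineMonicLegendre _ _ _ _).symm

theorem isPiecewisePoly_piecewiseMonicLegendre (m n : ℕ) :
    IsPiecewisePoly m n (piecewiseMonicLegendre m n) := fun j hj =>
  ⟨_, (isMonicOfDegree_affineMonicLegendre m (Nat.cast_ne_zero.mpr (by omega)) j).natDegree_eq.le,
    piecewiseMonicLegendre_eqOn hj⟩

theorem isPiecewisePoly_pow_sub_piecewiseMonicLegendre (p n : ℕ) :
    IsPiecewisePoly p n (fun x => x ^ (p + 1) - piecewiseMonicLegendre (p + 1) n x) :=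
  fun j hj =>
  ⟨X ^ (p + 1) - affineMonicLegendre (p + 1) n j,
    Nat.le_of_lt_succ <| (isMonicOfDegree_X_pow ℝ (p + 1)).natDegree_sub_lt p.succ_ne_zero
      (isMonicOfDegree_affineMonicLegendre _ (Nat.cast_ne_zero.mpr (by omega)) j),
    fun x hx => by simp [piecewiseMonicLegendre_eqOn hj hx]⟩

theorem integral_piecewiseMonicLegendre_mul_eq_zero {p n : ℕ} (hn : n ≠ 0) {g : ℝ → ℝ}
    (hg : IsPiecewisePoly p n g) :
    ∫ x in Ioo 0 1, piecewiseMonicLegendre (p + 1) n x * g x = 0 := by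
  rw [((isPiecewisePoly_piecewiseMonicLegendre _ _).mul hg).integral_Ioo_eq_sum hn]
  refine Finset.sum_eq_zero fun j hj => ?_
  obtain ⟨t, ht, hgt⟩ := hg j (Finset.mem_range.mp hj)
  rw [intervalIntegral.integral_congr_Ioo_of_le (div_le_add_one_div j n) fun x hx => by
    rw [piecewiseMonicLegendre_eqOn (Finset.mem_range.mp hj) (Ioo_subset_Ico_self hx),
      hgt x (Ioo_subset_Ico_self hx)]]
  exact integral_eval_affineMonicLegendre_mul_eq_zero _ (Nat.cast_ne_zero.mpr hn) _
    (Nat.lt_succ_of_le ht)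

theorem integral_piecewiseMonicLegendre_sq {n : ℕ} (hn : n ≠ 0) (m : ℕ) :
    ∫ x in Ioo 0 1, piecewiseMonicLegendre m n x ^ 2 =
      (((n : ℝ) ^ m)⁻¹) ^ 2 *
        ∫ u in (0 : ℝ)..1, ((monicShiftedLegendre m).eval u) ^ 2 := by
  have hE := isPiecewisePoly_piecewiseMonicLegendre m n
  have hpiece : ∀ j ∈ Finset.range n, ∫ x in (j : ℝ) / n..((j : ℝ) + 1) / n,
      piecewiseMonicLegendre m n x * piecewiseMonicLegendre m n x =
        (n : ℝ)⁻¹ * ((((n : ℝ) ^ m)⁻¹) ^ 2 *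
          ∫ u in (0 : ℝ)..1, ((monicShiftedLegendre m).eval u) ^ 2) := by
    intro j hj
    rw [← mul_assoc, ← integral_eval_affineMonicLegendre_sq m (Nat.cast_ne_zero.mpr hn)]
    refine intervalIntegral.integral_congr_Ioo_of_le (div_le_add_one_div j n) fun x hx => ?_
    rw [piecewiseMonicLegendre_eqOn (Finset.mem_range.mp hj) (Ioo_subset_Ico_self hx), sq]
  simp_rw [sq]
  rw [(hE.mul hE).integral_Ioo_eq_sum hn, Finset.sum_congr rfl hpiece, Finset.sum_const,
    Finset.card_range, nsmul_eq_mul, ← mul_assoc, mul_inv_cancel₀ (Nat.cast_ne_zero.mpr hn),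
    one_mul]
  simp_rw [sq]

/-- If `Pf` is the `L²(0,1)` orthogonal projection of `f(x) = x^(p+1)` onto the space of
discontinuous piecewise polynomials of degree `≤ p` on the uniform `n`-partition (characterized
by `Pf` lying in the space and `f − Pf` being `L²`-orthogonal to the space), then
`‖f − Pf‖ = ((p+1)!/((2p+2)!√(2p+3))) n^(−(p+1)) ‖f⁽ᵖ⁺¹⁾‖`. -/
theorem dg_projection_error_of_monomial (p n : ℕ) (hn : 1 ≤ n) (Pf : ℝ → ℝ)
    (hmem : IsPiecewisePoly p n Pf)
    (horth : ∀ g : ℝ → ℝ, IsPiecewisePoly p n g →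
      ∫ x in Set.Ioo (0 : ℝ) 1, (x ^ (p + 1) - Pf x) * g x = 0) :
    Real.sqrt (∫ x in Set.Ioo (0 : ℝ) 1, (x ^ (p + 1) - Pf x) ^ 2) =
      (Nat.factorial (p + 1) : ℝ) /
          ((Nat.factorial (2 * p + 2) : ℝ) * Real.sqrt (2 * (p : ℝ) + 3)) *
        (n : ℝ) ^ (-(p : ℤ) - 1) *
        Real.sqrt (∫ x in Set.Ioo (0 : ℝ) 1,
          (iteratedDeriv (p + 1) (fun y : ℝ => y ^ (p + 1)) x) ^ 2) := by
  have hn0 : n ≠ 0 := by omega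
  set E := piecewiseMonicLegendre (p + 1) n
  have hE : IsPiecewisePoly (p + 1) n E := isPiecewisePoly_piecewiseMonicLegendre (p + 1) n
  have he : IsPiecewisePoly (p + 1) n (fun x => x ^ (p + 1) - Pf x) :=
    (isPiecewisePoly_pow _ n).sub (hmem.mono p.le_succ)
  have hd : IsPiecewisePoly p n (fun x => x ^ (p + 1) - Pf x - E x) := by
    simpa only [sub_right_comm] using (isPiecewisePoly_pow_sub_piecewiseMonicLegendre p n).sub hmem
  rw [integral_sq_eq_of_sub_orthogonal ((he.mul hd).integrableOn hn0)
      ((hE.mul hd).integrableOn hn0)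
      (by simpa only [sq, IntegrableOn] using (hE.mul hE).integrableOn hn0)
      (horth _ hd) (integral_piecewiseMonicLegendre_mul_eq_zero hn0 hd),
    integral_piecewiseMonicLegendre_sq hn0, integral_monicShiftedLegendre_sq]
  simp only [iteratedDeriv_pow, Nat.descFactorial_self, Nat.sub_self, pow_zero, mul_one,
    setIntegral_const, Real.volume_real_Ioo_of_le zero_le_one, sub_zero, one_smul]
  rw [show (-(p : ℤ) - 1) = -((p + 1 : ℕ) : ℤ) by push_cast; ring, zpow_neg, zpow_natCast,
    Real.sqrt_sq (by positivity), show 2 * (p + 1) = 2 * p + 2 by ring,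
    show 2 * ((p + 1 : ℕ) : ℝ) + 1 = 2 * p + 3 by push_cast; ring,
    Real.sqrt_eq_iff_mul_self_eq_of_pos (by positivity)]
  field_simp
  rw [Real.sq_sqrt (by positivity)]
end

section
/- For all real r ≥ 1, √(2π) · r^{r+1/2} · e^{−r} · e^{1/(12r+1)} ≤ Γ(r+1) ≤ √(2π) · r^{r+1/2} · e^{−r} · e^{1/(12r)}; in particular for natural numbers r ≥ 1 the same bounds hold for r!. -/
/-!
Write `log Γ x = (x - 1/2) log x - x + log √(2π) + μ x`. The increment
`g x = μ x - μ (x + 1) = (x + 1/2) log (1 + 1/x) - 1` has, with `y = 1/(2x+1)`, the expansion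
`g x = ∑_{k ≥ 1} y^(2k) / (2k+1)`. Comparing it termwise with the geometric series
`∑ y^(2k)/3` and `∑ (y^2/3)^k` squeezes `g x` between two telescoping differences,
`1/(12x+1) - 1/(12(x+1)+1) ≤ g x ≤ 1/(12x) - 1/(12(x+1))`, and summing gives
`1/(12x+1) ≤ μ x ≤ 1/(12x)`.

To identify `μ`, define it instead as `∑ₙ g (x + n)`. The expansion shows that `g`, hence `μ`,
is convex, so `exp ((x - 1/2) log x - x + log √(2π) + μ x)` is log-convex, satisfies
`f (x+1) = x f x`, and (by Stirling's formula for `n!`, which fixes `μ 1`) takes the value `1`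
at `1`: by Bohr–Mollerup it is `Γ`.
-/

open Real Set Filter Topology

noncomputable def binetStep (x : ℝ) : ℝ := (x + 1 / 2) * log (1 + x⁻¹) - 1

theorem hasSum_binetStep {x : ℝ} (hx : 0 < x) :
    HasSum (fun k : ℕ => 1 / (2 * ((k : ℝ) + 1) + 1) * ((2 * x + 1)⁻¹ ^ 2) ^ (k + 1))
      (binetStep x) := by
  have h : HasSum (fun k : ℕ => 1 / (2 * (k : ℝ) + 1) * ((2 * x + 1)⁻¹ ^ 2) ^ k)
      (binetStep x + 1) := by
    rw [binetStep, sub_add_cancel]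
    convert! (hasSum_log_one_add_inv hx).mul_left (x + 1 / 2) using 2 with k
    rw [← pow_mul, pow_succ]
    field_simp
  simpa using (hasSum_nat_add_iff' 1).mpr h

theorem binetStep_nonneg {x : ℝ} (hx : 0 < x) : 0 ≤ binetStep x :=
  (hasSum_binetStep hx).nonneg fun k => by positivity

theorem binetStep_le {x : ℝ} (hx : 0 < x) :
    binetStep x ≤ 1 / (12 * x) - 1 / (12 * (x + 1)) := by
  set r := (2 * x + 1)⁻¹ ^ 2 with hr
  have hr0 : 0 < r := by positivity
  have hr1 : 1 - r = 4 * x * (x + 1) * r := by rw [hr]; field_simp; ring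
  have hgeom := ((hasSum_geometric_of_lt_one hr0.le
    (by rw [← sub_pos, hr1]; positivity)).mul_left r).div_const 3
  have hterm (k : ℕ) : 1 / (2 * ((k : ℝ) + 1) + 1) * r ^ (k + 1) ≤ r * r ^ k / 3 := by
    rw [one_div_mul_eq_div, ← pow_succ']
    exact div_le_div_of_nonneg_left (by positivity) (by norm_num)
      (by linarith [k.cast_nonneg (α := ℝ)])
  calc binetStep x ≤ r * (1 - r)⁻¹ / 3 := hasSum_le hterm (hasSum_binetStep hx) hgeom
    _ = 1 / (12 * x) - 1 / (12 * (x + 1)) := by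
      rw [hr1]; field_simp; ring

theorem le_binetStep {x : ℝ} (hx : 1 / 2 ≤ x) :
    1 / (12 * x + 1) - 1 / (12 * (x + 1) + 1) ≤ binetStep x := by
  have hx0 : 0 < x := by linarith
  set r := (2 * x + 1)⁻¹ ^ 2 with hr
  have hr0 : 0 < r := by positivity
  have hr3 : 1 - r / 3 = (12 * x ^ 2 + 12 * x + 2) * r / 3 := by rw [hr]; field_simp; ring
  have hgeom := (hasSum_geometric_of_lt_one (r := r / 3) (by positivity)
    (by rw [← sub_pos, hr3]; positivity)).mul_left (r / 3)
  have hterm (k : ℕ) : r / 3 * (r / 3) ^ k ≤ 1 / (2 * ((k : ℝ) + 1) + 1) * r ^ (k + 1) := by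
    have h3 : 2 * ((k : ℝ) + 1) + 1 ≤ 3 ^ (k + 1) := by
      have := one_add_mul_le_pow (a := (2 : ℝ)) (by norm_num) (k + 1)
      push_cast at this; norm_num at this; linarith
    rw [← pow_succ', div_pow, one_div_mul_eq_div]
    exact div_le_div_of_nonneg_left (by positivity) (by positivity) h3
  calc 1 / (12 * x + 1) - 1 / (12 * (x + 1) + 1) ≤ r / 3 * (1 - r / 3)⁻¹ := by
        rw [hr3, div_sub_div _ _ (by positivity) (by positivity)]
        field_simp
        nlinarith
    _ ≤ binetStep x := hasSum_le hterm hgeom (hasSum_binetStep hx0)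

theorem hasSum_sub_succ_of_antitone {f : ℕ → ℝ} {l : ℝ} (hf : Antitone f)
    (hl : Tendsto f atTop (𝓝 l)) : HasSum (fun n => f n - f (n + 1)) (f 0 - l) :=
  (hasSum_iff_tendsto_nat_of_nonneg (fun n => sub_nonneg.2 (hf n.le_succ)) _).2 <| by
    simpa only [Finset.sum_range_sub'] using hl.const_sub (f 0)

theorem hasSum_one_div_sub_one_div {a b : ℝ} (ha : 0 < a) (hb : 0 < b) :
    HasSum (fun n : ℕ => 1 / (a * n + b) - 1 / (a * (n + 1) + b)) (1 / b) := by
  have hanti : Antitone fun n : ℕ => 1 / (a * n + b) := antitone_nat_of_succ_le fun n =>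
    one_div_le_one_div_of_le (by positivity) (by push_cast; nlinarith)
  have hlim : Tendsto (fun n : ℕ => 1 / (a * n + b)) atTop (𝓝 0) :=
    tendsto_const_nhds.div_atTop <|
      (tendsto_natCast_atTop_atTop.const_mul_atTop ha).atTop_add tendsto_const_nhds
  simpa using hasSum_sub_succ_of_antitone hanti hlim

theorem ConvexOn.tsum {ι E : Type*} [AddCommGroup E] [Module ℝ E] {s : Set E}
    {f : ι → E → ℝ} (hs : Convex ℝ s) (hf : ∀ i, ConvexOn ℝ s (f i))
    (hsum : ∀ x ∈ s, Summable fun i => f i x) : ConvexOn ℝ s fun x => ∑' i, f i x := by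
  refine ⟨hs, fun x hx y hy a b ha hb hab => ?_⟩
  have hx' := (hsum x hx).mul_left a
  have hy' := (hsum y hy).mul_left b
  simp only [smul_eq_mul]
  rw [← tsum_mul_left, ← tsum_mul_left, ← hx'.tsum_add hy']
  exact (hsum _ (hs hx hy ha hb hab)).tsum_le_tsum (fun i => (hf i).2 hx hy ha hb hab) (hx'.add hy')

theorem convexOn_inv_two_mul_add_one_pow (n : ℕ) :
    ConvexOn ℝ (Ioi 0) fun x : ℝ => (2 * x + 1)⁻¹ ^ n := by
  let g : ℝ →ᵃ[ℝ] ℝ := (2 : ℝ) • AffineMap.id ℝ ℝ + AffineMap.const ℝ ℝ 1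
  have h := ((convexOn_zpow (-(n : ℤ))).comp_affineMap g).subset
    (fun x (hx : 0 < x) => show 0 < g x by simp [g]; positivity) (convex_Ioi 0)
  refine h.congr fun x _ => ?_
  simp [g, zpow_neg, inv_pow]

theorem convexOn_binetStep : ConvexOn ℝ (Ioi 0) binetStep := by
  refine (ConvexOn.tsum (convex_Ioi 0) (fun k => ?_) fun x hx => (hasSum_binetStep hx).summable
    ).congr fun x hx => (hasSum_binetStep hx).tsum_eq
  simp_rw [← pow_mul]
  exact (convexOn_inv_two_mul_add_one_pow _).smul (by positivity)

noncomputable def binetMu (x : ℝ) : ℝ := ∑' n : ℕ, binetStep (x + n)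

theorem binetStep_add_le {x : ℝ} (hx : 0 < x) (n : ℕ) :
    binetStep (x + n) ≤ 1 / (12 * n + 12 * x) - 1 / (12 * (n + 1) + 12 * x) := by
  convert binetStep_le (x := x + n) (by positivity) using 3 <;> ring

theorem summable_binetStep {x : ℝ} (hx : 0 < x) : Summable fun n : ℕ => binetStep (x + n) :=
  (hasSum_one_div_sub_one_div (by norm_num) (by positivity)).summable.of_nonneg_of_le
    (fun n => binetStep_nonneg (by positivity)) (binetStep_add_le hx)

theorem binetMu_le {x : ℝ} (hx : 0 < x) : binetMu x ≤ 1 / (12 * x) :=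
  hasSum_le (binetStep_add_le hx) (summable_binetStep hx).hasSum
    (hasSum_one_div_sub_one_div (by norm_num) (by positivity))

theorem le_binetMu {x : ℝ} (hx : 1 / 2 ≤ x) : 1 / (12 * x + 1) ≤ binetMu x := by
  have hle (n : ℕ) :
      1 / (12 * n + (12 * x + 1)) - 1 / (12 * (n + 1) + (12 * x + 1)) ≤ binetStep (x + n) := by
    convert le_binetStep (x := x + n) (by linarith [n.cast_nonneg (α := ℝ)]) using 3 <;> ring
  exact hasSum_le hle (hasSum_one_div_sub_one_div (by norm_num) (by positivity))
    (summable_binetStep (by linarith)).hasSum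

theorem binetMu_eq_binetStep_add {x : ℝ} (hx : 0 < x) :
    binetMu x = binetStep x + binetMu (x + 1) := by
  rw [binetMu, (summable_binetStep hx).tsum_eq_zero_add, binetMu]
  simp only [Nat.cast_zero, add_zero, Nat.cast_add, Nat.cast_one, add_assoc, add_comm (1 : ℝ)]

theorem binetStep_natCast_add_one (m : ℕ) :
    binetStep (m + 1) =
      log (Stirling.stirlingSeq (m + 1)) - log (Stirling.stirlingSeq (m + 2)) := by
  refine (hasSum_binetStep m.cast_add_one_pos).unique ?_
  convert Stirling.log_stirlingSeq_sdiff_hasSum m using 3 <;> push_cast <;> ring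

theorem binetMu_one : binetMu 1 = 1 - log √(2 * π) := by
  have hlim : Tendsto (fun m : ℕ => log (Stirling.stirlingSeq (m + 1))) atTop (𝓝 (log √π)) :=
    ((continuousAt_log (by positivity)).tendsto.comp
      Stirling.tendsto_stirlingSeq_sqrt_pi).comp (tendsto_add_atTop_nat 1)
  have h := hasSum_sub_succ_of_antitone (f := fun m : ℕ => log (Stirling.stirlingSeq (m + 1)))
    Stirling.log_stirlingSeq'_antitone hlim
  have h' : HasSum (fun m : ℕ => binetStep (1 + m)) (log (rexp 1 / √2) - log √π) := by
    convert h using 2 with m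
    · rw [add_comm, binetStep_natCast_add_one]
    · simp
  rw [binetMu, h'.tsum_eq, log_div (exp_ne_zero 1) (by positivity), log_exp,
    sqrt_mul zero_le_two, log_mul (by positivity) (by positivity)]
  ring

theorem convexOn_binetMu : ConvexOn ℝ (Ioi 0) binetMu := by
  refine ConvexOn.tsum (convex_Ioi 0) (fun n => ?_) fun x hx => summable_binetStep hx
  have h := (convexOn_binetStep.translate_right (n : ℝ)).subset
    (fun x (hx : 0 < x) => show 0 < (n : ℝ) + x by positivity) (convex_Ioi 0)
  exact h.congr fun x _ => by simp [add_comm]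

theorem convexOn_sub_half_mul_log_sub_add (c : ℝ) :
    ConvexOn ℝ (Ioi 0) fun x : ℝ => (x - 1 / 2) * log x - x + c := by
  have hxlogx := convexOn_mul_log.subset Ioi_subset_Ici_self (convex_Ioi 0)
  have hlog : ConvexOn ℝ (Ioi 0) fun x => (1 / 2 : ℝ) • -log x :=
    strictConcaveOn_log_Ioi.concaveOn.neg.smul (by norm_num)
  have hid := (concaveOn_id (𝕜 := ℝ) (convex_Ioi (0 : ℝ))).neg
  refine ((hxlogx.add hlog).add hid).add_const c |>.congr fun x _ => ?_
  simp only [Pi.add_apply, Pi.neg_apply, id, smul_eq_mul]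
  ring

theorem Gamma_eq_exp_binetMu {x : ℝ} (hx : 0 < x) :
    Gamma x = exp ((x - 1 / 2) * log x - x + log √(2 * π) + binetMu x) := by
  refine (eq_Gamma_of_log_convex (f := fun t => exp ((t - 1 / 2) * log t - t + log √(2 * π) +
    binetMu t)) ?_ (fun {y} hy => ?_) (fun _ => exp_pos _) ?_ hx).symm
  · simp only [Function.comp_def, log_exp]
    exact (convexOn_sub_half_mul_log_sub_add _).add convexOn_binetMu
  · have hlog : log (1 + y⁻¹) = log (y + 1) - log y := by
      rw [← log_div (by positivity) hy.ne', add_div, div_self hy.ne', one_div, add_comm]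
    have hmul (a : ℝ) : y * exp a = exp (a + log y) := by rw [exp_add, exp_log hy, mul_comm]
    rw [binetMu_eq_binetStep_add hy, binetStep, hlog, hmul]
    congr 1
    ring
  · rw [binetMu_one]; norm_num

theorem Gamma_add_one_eq_binetMu {x : ℝ} (hx : 0 < x) :
    Gamma (x + 1) = √(2 * π) * x ^ (x + 1 / 2) * exp (-x) * exp (binetMu x) := by
  rw [Gamma_add_one hx.ne', Gamma_eq_exp_binetMu hx, rpow_def_of_pos hx,
    ← exp_log (by positivity : 0 < √(2 * π)), ← exp_log hx]
  simp only [← exp_add, log_exp]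
  congr 1
  ring

theorem robbins_le_Gamma_add_one {r : ℝ} (hr : 1 / 2 ≤ r) :
    √(2 * π) * r ^ (r + 1 / 2) * exp (-r) * exp (1 / (12 * r + 1)) ≤ Gamma (r + 1) := by
  rw [Gamma_add_one_eq_binetMu (by linarith)]
  gcongr
  exact le_binetMu hr

theorem Gamma_add_one_le_robbins {r : ℝ} (hr : 0 < r) :
    Gamma (r + 1) ≤ √(2 * π) * r ^ (r + 1 / 2) * exp (-r) * exp (1 / (12 * r)) := by
  rw [Gamma_add_one_eq_binetMu hr]
  gcongr
  exact binetMu_le hr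

/-- Robbins' form of Stirling's approximation: for all real `r ≥ 1`,
`√(2π) r^(r+1/2) e^(−r) e^(1/(12r+1)) ≤ Γ(r+1) ≤ √(2π) r^(r+1/2) e^(−r) e^(1/(12r))`;
in particular the same bounds hold for `r!` when `r` is a natural number `≥ 1`. -/
theorem robbins_stirling :
    (∀ r : ℝ, 1 ≤ r →
      Real.sqrt (2 * π) * r ^ (r + 1 / 2 : ℝ) * Real.exp (-r) * Real.exp (1 / (12 * r + 1)) ≤
          Real.Gamma (r + 1) ∧
        Real.Gamma (r + 1) ≤
          Real.sqrt (2 * π) * r ^ (r + 1 / 2 : ℝ) * Real.exp (-r) * Real.exp (1 / (12 * r))) ∧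
    (∀ r : ℕ, 1 ≤ r →
      Real.sqrt (2 * π) * (r : ℝ) ^ ((r : ℝ) + 1 / 2) * Real.exp (-(r : ℝ)) *
          Real.exp (1 / (12 * (r : ℝ) + 1)) ≤ (Nat.factorial r : ℝ) ∧
        (Nat.factorial r : ℝ) ≤
          Real.sqrt (2 * π) * (r : ℝ) ^ ((r : ℝ) + 1 / 2) * Real.exp (-(r : ℝ)) *
            Real.exp (1 / (12 * (r : ℝ)))) := by
  have hreal (r : ℝ) (hr : 1 ≤ r) :=
    And.intro (robbins_le_Gamma_add_one (by linarith : 1 / 2 ≤ r))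
      (Gamma_add_one_le_robbins (by linarith))
  refine ⟨hreal, fun n hn => ?_⟩
  simpa [Gamma_nat_eq_factorial] using hreal n (by exact_mod_cast hn)
end

section
/- Define R(p,k,n) = ((4/(e·π)) · n(p+1)/((p−k)(n−1)+1))^{p+1} · √(4p+6). For fixed integers k ≥ 0 and n ≥ 2, if R(p̄,k,n) ≤ 1 for some p̄ > k+1, then R(p,k,n) is strictly decreasing in p for p ≥ p̄. -/
/-!
Write `R(p) = B(p)^(p+1) · s(p)` with `s(p) = √(4p+6)`. The factor `B` is antitone for `p ≥ k`,
and `s(p+1)^(p+1) < s(p)^(p+2)` because `(1 + 4/(4p+6))^(p+1) < e < 4p+6`. If `R(p) ≤ 1`, then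
`(B(p) s(p+1))^(p+1) < B(p)^(p+1) s(p)^(p+2) ≤ s(p)^(p+1)`, so `B(p) s(p+1) < s(p)` and
`R(p+1) ≤ B(p)^(p+2) s(p+1) < R(p)`. In particular `R(p+1) ≤ 1` again, and induction from `p̄` applies.
-/

open Real

theorem add_pow_lt_pow_succ {a h : ℝ} {m : ℕ} (hh : 0 ≤ h) (hmh : m * h < a)
    (ha : exp 1 ≤ a) : (a + h) ^ m < a ^ (m + 1) := by
  have ha₀ : 0 < a := (exp_pos 1).trans_le ha
  calc (a + h) ^ m = a ^ m * (1 + h / a) ^ m := by rw [← mul_pow]; field_simp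
    _ ≤ a ^ m * exp (m * (h / a)) := by
      rw [exp_nat_mul]
      gcongr
      linarith [add_one_le_exp (h / a)]
    _ < a ^ m * exp 1 := by
      gcongr
      rwa [← mul_div_assoc, div_lt_one ha₀]
    _ ≤ a ^ (m + 1) := by rw [pow_succ]; gcongr

theorem sqrt_pow_lt_sqrt_pow {x y : ℝ} {m l : ℕ} (hx : 0 ≤ x) (hy : 0 ≤ y)
    (h : x ^ m < y ^ l) : √x ^ m < √y ^ l := by
  refine lt_of_pow_lt_pow_left₀ 2 (by positivity) ?_
  rwa [← pow_mul, ← pow_mul, mul_comm m, mul_comm l, pow_mul, pow_mul, sq_sqrt hx, sq_sqrt hy]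

theorem pow_succ_mul_lt_pow_mul {b b' s s' : ℝ} {m : ℕ} (hb : 0 < b)
    (hb' : 0 ≤ b') (hbb' : b' ≤ b) (hs : 0 ≤ s) (hs' : 0 ≤ s') (hss' : s' ^ m < s ^ (m + 1))
    (h : b ^ m * s ≤ 1) : b' ^ (m + 1) * s' < b ^ m * s := by
  have hbs : b * s' < s := by
    refine lt_of_pow_lt_pow_left₀ m hs ?_
    calc (b * s') ^ m = b ^ m * s' ^ m := mul_pow b s' m
      _ < b ^ m * s ^ (m + 1) := by gcongr
      _ = (b ^ m * s) * s ^ m := by ring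
      _ ≤ s ^ m := mul_le_of_le_one_left (by positivity) h
  calc b' ^ (m + 1) * s' ≤ b ^ (m + 1) * s' := by gcongr
    _ = b ^ m * (b * s') := by ring
    _ < b ^ m * s := by gcongr

noncomputable def B (k n : ℕ) (p : ℝ) : ℝ :=
  4 / (exp 1 * π) * ((n : ℝ) * (p + 1)) / ((p - k) * ((n : ℝ) - 1) + 1)

noncomputable def R (k n p : ℕ) : ℝ :=
  B k n p ^ (p + 1) * √(4 * (p : ℝ) + 6)

theorem B_pos {k n : ℕ} (hn : 1 ≤ n) {p : ℝ} (hp : k ≤ p) : 0 < B k n p := by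
  have hn' : (1 : ℝ) ≤ n := by exact_mod_cast hn
  have hk : (0 : ℝ) ≤ k := k.cast_nonneg
  unfold B
  have : 0 < (p - k) * ((n : ℝ) - 1) + 1 := by nlinarith
  have : 0 < p + 1 := by linarith
  positivity

theorem B_antitoneOn {k n : ℕ} (hn : 2 ≤ n) : AntitoneOn (B k n) (Set.Ici (k : ℝ)) := by
  intro x hx y hy hxy
  simp only [Set.mem_Ici] at hx hy
  have hn' : (2 : ℝ) ≤ n := by exact_mod_cast hn
  have hk : (0 : ℝ) ≤ k := k.cast_nonneg
  have hdx : 0 < (x - k) * ((n : ℝ) - 1) + 1 := by nlinarith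
  have hdy : 0 < (y - k) * ((n : ℝ) - 1) + 1 := by nlinarith
  unfold B
  rw [div_le_div_iff₀ hdy hdx]
  have hc : 0 ≤ 4 / (exp 1 * π) * n := by positivity
  -- the difference of the two sides is `(y - x) * ((k + 1) * (n - 1) - 1)`
  have key : (y + 1) * ((x - k) * ((n : ℝ) - 1) + 1) ≤
      (x + 1) * ((y - k) * ((n : ℝ) - 1) + 1) := by
    nlinarith [mul_nonneg (sub_nonneg.2 hxy) (by nlinarith : (0 : ℝ) ≤ (k + 1) * (n - 1) - 1)]
  calc _ = 4 / (exp 1 * π) * n * ((y + 1) * ((x - k) * ((n : ℝ) - 1) + 1)) := by ring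
    _ ≤ 4 / (exp 1 * π) * n * ((x + 1) * ((y - k) * ((n : ℝ) - 1) + 1)) := by gcongr
    _ = _ := by ring

theorem sqrt_succ_pow_lt (p : ℕ) :
    √(4 * ((p : ℝ) + 1) + 6) ^ (p + 1) < √(4 * (p : ℝ) + 6) ^ (p + 1 + 1) := by
  have hp : (0 : ℝ) ≤ p := p.cast_nonneg
  refine sqrt_pow_lt_sqrt_pow (by positivity) (by positivity) ?_
  rw [show 4 * ((p : ℝ) + 1) + 6 = 4 * p + 6 + 4 by ring]
  refine add_pow_lt_pow_succ zero_le_four (by push_cast; linarith) ?_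
  linarith [exp_one_lt_d9]

theorem R_succ_lt_of_le_one {k n p : ℕ} (hn : 2 ≤ n) (hkp : k ≤ p) (h : R k n p ≤ 1) :
    R k n (p + 1) < R k n p := by
  have hkp' : (k : ℝ) ≤ p := by exact_mod_cast hkp
  unfold R
  push_cast
  exact pow_succ_mul_lt_pow_mul (B_pos (by omega) hkp')
    (B_pos (by omega) (by linarith)).le
    (B_antitoneOn hn hkp' (by simp only [Set.mem_Ici]; linarith) (by linarith))
    (sqrt_nonneg _) (sqrt_nonneg _) (sqrt_succ_pow_lt p) h

/-- For fixed integers `k ≥ 0` and `n ≥ 2`: if `R(p̄,k,n) ≤ 1` for some `p̄ > k+1`, then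
`R(p,k,n) = ((4/(eπ)) · n(p+1)/((p−k)(n−1)+1))^(p+1) √(4p+6)` is strictly decreasing in `p`
for `p ≥ p̄`. -/
theorem R_strict_anti_in_p (k : ℕ) (n : ℕ) (hn : 2 ≤ n) (pbar : ℕ) (hpbar : k + 1 < pbar)
    (hR : (4 / (Real.exp 1 * π) * ((n : ℝ) * ((pbar : ℝ) + 1)) /
            (((pbar : ℝ) - (k : ℝ)) * ((n : ℝ) - 1) + 1)) ^ (pbar + 1) *
          Real.sqrt (4 * (pbar : ℝ) + 6) ≤ 1) :
    ∀ p : ℕ, pbar ≤ p →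
      (4 / (Real.exp 1 * π) * ((n : ℝ) * ((p + 1 : ℝ) + 1)) /
            (((p + 1 : ℝ) - (k : ℝ)) * ((n : ℝ) - 1) + 1)) ^ (p + 1 + 1) *
          Real.sqrt (4 * (p + 1 : ℝ) + 6) <
        (4 / (Real.exp 1 * π) * ((n : ℝ) * ((p : ℝ) + 1)) /
            (((p : ℝ) - (k : ℝ)) * ((n : ℝ) - 1) + 1)) ^ (p + 1) *
          Real.sqrt (4 * (p : ℝ) + 6) := by
  have hle : ∀ p, pbar ≤ p → R k n p ≤ 1 :=
    Nat.le_induction hR fun p hp ih => (R_succ_lt_of_le_one hn (by omega) ih).le.trans ih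
  intro p hp
  have := R_succ_lt_of_le_one hn (by omega) (hle p hp)
  simpa only [R, B, Nat.cast_add, Nat.cast_one] using this
end

section
/- For every odd integer p ≥ 1 and any real numbers a_s, b_s indexed by even s with 0 ≤ s ≤ p−1, there exists a polynomial g of degree at most p such that g^{(s)}(0) = a_s and g^{(s)}(1) = b_s for every even s with 0 ≤ s ≤ p−1. -/
/-!
Induct on `k` with `p = 2k + 1`. The data at even orders `s ≥ 2` prescribe the second derivative
`h = g''`, a polynomial of degree at most `2k - 1` solving the problem for the data shifted by two.
Any polynomial `h` is the second derivative of some `g` of degree two higher, and adding an affine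
function to `g` fixes the remaining values `g(0) = a₀` and `g(1) = b₀` without changing `g''`.
-/

namespace Polynomial

variable {K : Type*} [Field K]

noncomputable def antiderivative (q : K[X]) : K[X] :=
  q.sum fun n c => C (c / (n + 1)) * X ^ (n + 1)

theorem derivative_antiderivative [CharZero K] (q : K[X]) : derivative (antiderivative q) = q := by
  rw [antiderivative, Polynomial.sum, derivative_sum]
  conv_rhs => rw [← q.sum_C_mul_X_pow_eq, Polynomial.sum]
  refine Finset.sum_congr rfl fun n _ => ?_
  rw [derivative_C_mul_X_pow]
  push_cast
  rw [div_mul_cancel₀ _ (Nat.cast_add_one_ne_zero n)]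

theorem natDegree_antiderivative_le (q : K[X]) :
    (antiderivative q).natDegree ≤ q.natDegree + 1 := by
  rw [antiderivative, Polynomial.sum]
  refine natDegree_sum_le_of_forall_le _ _ fun n hn => ?_
  exact (natDegree_C_mul_X_pow_le _ _).trans (Nat.succ_le_succ (le_natDegree_of_mem_supp n hn))

theorem exists_derivative_derivative_eq_eval_zero_eval_one [CharZero K] (q : K[X]) (α β : K) :
    ∃ g : K[X], g.natDegree ≤ q.natDegree + 2 ∧ derivative (derivative g) = q ∧
      g.eval 0 = α ∧ g.eval 1 = β := by
  set A := antiderivative (antiderivative q)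
  have hA : A.natDegree ≤ q.natDegree + 2 :=
    (natDegree_antiderivative_le _).trans (by simpa using natDegree_antiderivative_le q)
  set c := α - A.eval 0
  set d := β - A.eval 1 - c
  refine ⟨A + (C d * X + C c), ?_, ?_, ?_, ?_⟩
  · exact natDegree_add_le_of_degree_le hA (natDegree_linear_le.trans (by omega))
  · simp [A, derivative_antiderivative]
  · simp [c]
  · simp [c, d]

theorem exists_even_order_interpolation [CharZero K] (k : ℕ) (a b : ℕ → K) :
    ∃ g : K[X], g.natDegree ≤ 2 * k + 1 ∧
      ∀ s ≤ 2 * k, Even s →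
        (derivative^[s] g).eval 0 = a s ∧ (derivative^[s] g).eval 1 = b s := by
  induction k generalizing a b with
  | zero =>
    refine ⟨C (b 0 - a 0) * X + C (a 0), natDegree_linear_le, fun s hs _ => ?_⟩
    obtain rfl : s = 0 := by omega
    simp
  | succ k ih =>
    obtain ⟨h, hdeg, hh⟩ := ih (fun s => a (s + 2)) (fun s => b (s + 2))
    obtain ⟨g, hgdeg, hg, h0, h1⟩ := exists_derivative_derivative_eq_eval_zero_eval_one h (a 0) (b 0)
    refine ⟨g, by omega, fun s hs hev => ?_⟩
    rcases s with _ | _ | s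
    · exact ⟨h0, h1⟩
    · exact absurd hev Nat.not_even_one
    · rw [Function.iterate_succ_apply, Function.iterate_succ_apply, hg]
      exact hh s (by omega) (by simpa [Nat.even_add] using hev)

end Polynomial

theorem even_order_hermite_interpolation_general (p : ℕ) (hodd : Odd p)
    (a b : ℕ → ℝ) :
    ∃ g : Polynomial ℝ, g.natDegree ≤ p ∧
      ∀ s : ℕ, s ≤ p - 1 → Even s →
        (Polynomial.derivative^[s] g).eval 0 = a s ∧
        (Polynomial.derivative^[s] g).eval 1 = b s := by
  obtain ⟨k, rfl⟩ := hodd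
  obtain ⟨g, hdeg, hg⟩ := Polynomial.exists_even_order_interpolation k a b
  exact ⟨g, hdeg, fun s hs => hg s (by omega)⟩

/-- For every odd integer `p ≥ 1` and data `a_s, b_s` (for even `s`, `0 ≤ s ≤ p−1`), there is a
polynomial `g` of degree at most `p` with `g⁽ˢ⁾(0) = a_s` and `g⁽ˢ⁾(1) = b_s` for all even
`s ≤ p−1`. -/
theorem even_order_hermite_interpolation (p : ℕ) (hp : 1 ≤ p) (hodd : Odd p)
    (a b : ℕ → ℝ) :
    ∃ g : Polynomial ℝ, g.natDegree ≤ p ∧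
      ∀ s : ℕ, s ≤ p - 1 → Even s →
        (Polynomial.derivative^[s] g).eval 0 = a s ∧
        (Polynomial.derivative^[s] g).eval 1 = b s :=
  even_order_hermite_interpolation_general p hodd a b
end

section
/- For every even integer p ≥ 0 and any real numbers a_s, b_s indexed by odd s with 1 ≤ s ≤ p−1, there exists a polynomial g of degree at most p such that g^{(s)}(0) = a_s and g^{(s)}(1) = b_s for every odd s with 1 ≤ s ≤ p−1. -/
/-! Induction on `k`, for polynomials of degree at most `2k`. To pass from `k` to `k + 1`, first
choose `m` of degree at most `2k + 2` whose `(2k+1)`-st derivative is the linear polynomial taking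
the prescribed values at `0` and `1`; then correct the lower odd-order data by a polynomial `r` of
degree at most `2k`, given by the induction hypothesis. Since `r⁽²ᵏ⁺¹⁾ = 0`, the correction does not
disturb the top-order conditions met by `m`. An odd `p` imposes only the conditions of
`p - 1`. -/

open Polynomial

section
variable {K : Type*} [Field K] [CharZero K]

theorem exists_natDegree_le_iterate_derivative_eq_linear (n : ℕ) (α β : K) :
    ∃ m : K[X], m.natDegree ≤ n + 1 ∧ derivative^[n] m = C α + C β * X := by
  refine ⟨C (α / n.factorial) * X ^ n + C (β / (n + 1).factorial) * X ^ (n + 1), ?_, ?_⟩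
  · exact (natDegree_add_le _ _).trans <| max_le
      ((natDegree_C_mul_X_pow_le _ _).trans n.le_succ) (natDegree_C_mul_X_pow_le _ _)
  · have hdesc : (n + 1).descFactorial n = (n + 1).factorial := by
      simpa using Nat.factorial_mul_descFactorial n.le_succ
    rw [iterate_map_add, iterate_derivative_C_mul, iterate_derivative_C_mul,
      iterate_derivative_X_pow_eq_C_mul, iterate_derivative_X_pow_eq_C_mul,
      Nat.descFactorial_self, hdesc, Nat.sub_self, Nat.add_sub_cancel_left, pow_zero, pow_one,
      mul_one, ← mul_assoc, ← C_mul, ← C_mul,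
      div_mul_cancel₀ _ (Nat.cast_ne_zero.2 n.factorial_ne_zero),
      div_mul_cancel₀ _ (Nat.cast_ne_zero.2 (n + 1).factorial_ne_zero)]

theorem exists_natDegree_le_odd_iterate_derivative_eval_zero_one (k : ℕ) (a b : ℕ → K) :
    ∃ g : K[X], g.natDegree ≤ 2 * k ∧ ∀ s < 2 * k, Odd s →
      (derivative^[s] g).eval 0 = a s ∧ (derivative^[s] g).eval 1 = b s := by
  induction k generalizing a b with
  | zero => exact ⟨0, by simp, fun s hs => absurd hs (Nat.not_lt_zero s)⟩
  | succ k ih =>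
    obtain ⟨m, hm_deg, hm⟩ := exists_natDegree_le_iterate_derivative_eq_linear (2 * k + 1)
      (a (2 * k + 1)) (b (2 * k + 1) - a (2 * k + 1))
    obtain ⟨r, hr_deg, hr⟩ := ih (fun s => a s - (derivative^[s] m).eval 0)
      (fun s => b s - (derivative^[s] m).eval 1)
    refine ⟨m + r, (natDegree_add_le _ _).trans (max_le hm_deg (by omega)), fun s hs hodd => ?_⟩
    rw [iterate_map_add, eval_add, eval_add]
    obtain hlt | rfl : s < 2 * k ∨ s = 2 * k + 1 := by
      obtain ⟨t, rfl⟩ := hodd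
      omega
    · obtain ⟨h0, h1⟩ := hr s hlt hodd
      exact ⟨by rw [h0, add_sub_cancel], by rw [h1, add_sub_cancel]⟩
    · rw [iterate_derivative_eq_zero (p := r) (by omega), hm]
      constructor <;> simp
end

theorem odd_order_hermite_interpolation_general (p : ℕ) (a b : ℕ → ℝ) :
    ∃ g : Polynomial ℝ, g.natDegree ≤ p ∧
      ∀ s : ℕ, s ≤ p - 1 → Odd s →
        (Polynomial.derivative^[s] g).eval 0 = a s ∧
        (Polynomial.derivative^[s] g).eval 1 = b s := by
  obtain ⟨g, hdeg, hg⟩ := exists_natDegree_le_odd_iterate_derivative_eval_zero_one (p / 2) a b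
  refine ⟨g, hdeg.trans (Nat.mul_div_le p 2), fun s hs hodd => hg s ?_ hodd⟩
  obtain ⟨t, rfl⟩ := hodd
  omega

/-- For every even integer `p ≥ 0` and data `a_s, b_s` (for odd `s`, `1 ≤ s ≤ p−1`), there is a
polynomial `g` of degree at most `p` with `g⁽ˢ⁾(0) = a_s` and `g⁽ˢ⁾(1) = b_s` for all odd
`s ≤ p−1`. -/
theorem odd_order_hermite_interpolation (p : ℕ) (heven : Even p) (a b : ℕ → ℝ) :
    ∃ g : Polynomial ℝ, g.natDegree ≤ p ∧
      ∀ s : ℕ, s ≤ p - 1 → Odd s →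
        (Polynomial.derivative^[s] g).eval 0 = a s ∧
        (Polynomial.derivative^[s] g).eval 1 = b s :=
  odd_order_hermite_interpolation_general p a b
end
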